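/- Let T be a compact metric space, X a Hilbert space, (ω_i)_{i≥1} Lipschitz self-maps with bounded Lipschitz constants r_i, and (R_i)_{i≥1} ⊂ L(X) with ∑_{i=1}^∞ ‖R_i‖ < ∞. Then for every μ ∈ cabv(X), the series ∑_{i=1}^∞ R_i ∘ ω_i(μ) is absolutely convergent in (cabv(X), variational norm), and the resulting operator H(μ) = ∑_{i=1}^∞ R_i ∘ ω_i(μ) is linear and continuous with ‖H‖ ≤ ∑_{i=1}^∞ ‖R_i‖. -/

import Mathlib

open MeasureTheory Filter Topology Set

noncomputable section

/-- A finite Borel partition of the whole space. -/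
def IsBorelPartition {T : Type*} [MeasurableSpace T] (P : Finset (Set T)) : Prop :=
  (∀ A ∈ P, MeasurableSet A) ∧ ((P : Set (Set T)).PairwiseDisjoint id) ∧
    ⋃₀ (P : Set (Set T)) = Set.univ

/-- Total variation of a vector measure, as an extended real. -/
def evar {T X : Type*} [MeasurableSpace T] [NormedAddCommGroup X]
    (μ : VectorMeasure T X) : ENNReal :=
  ⨆ (P : Finset (Set T)) (_ : IsBorelPartition P), ∑ A ∈ P, (‖μ A‖₊ : ENNReal)

/-- Bounded variation. -/
def BddVar {T X : Type*} [MeasurableSpace T] [NormedAddCommGroup X]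
    (μ : VectorMeasure T X) : Prop := evar μ ≠ ⊤

/-- The variational norm. -/
def varNorm {T X : Type*} [MeasurableSpace T] [NormedAddCommGroup X]
    (μ : VectorMeasure T X) : ℝ := (evar μ).toReal

/-- Composition of a bounded operator with a vector measure. -/
def opComp {T X Y 𝕜 : Type*} [MeasurableSpace T] [NontriviallyNormedField 𝕜]
    [NormedAddCommGroup X] [NormedSpace 𝕜 X] [NormedAddCommGroup Y] [NormedSpace 𝕜 Y]
    (R : X →L[𝕜] Y) (μ : VectorMeasure T X) : VectorMeasure T Y :=
  μ.mapRange R.toLinearMap.toAddMonoidHom R.continuous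

/-- The Markov-type operator generated by operators `R i` and maps `ω i`. -/
def markovH {T X 𝕜 : Type*} [MeasurableSpace T] [NontriviallyNormedField 𝕜]
    [NormedAddCommGroup X] [NormedSpace 𝕜 X] {M : ℕ}
    (R : Fin M → X →L[𝕜] X) (ω : Fin M → T → T) (μ : VectorMeasure T X) :
    VectorMeasure T X :=
  ∑ i, opComp (R i) (μ.map (ω i))

/-- Simple (finitely-valued, measurable) function. -/
def IsSimpleFn {T X : Type*} [MeasurableSpace T] (g : T → X) : Prop :=
  (Set.range g).Finite ∧ ∀ x : X, MeasurableSet (g ⁻¹' {x})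

/-- Integral of a simple function against a vector measure. -/
def simpleIntegral (𝕜 : Type*) {T X : Type*} [RCLike 𝕜] [MeasurableSpace T]
    [NormedAddCommGroup X] [InnerProductSpace 𝕜 X] (μ : VectorMeasure T X) (g : T → X) : 𝕜 :=
  ∑ᶠ x : X, (inner 𝕜 x (μ (g ⁻¹' {x})) : 𝕜)

/-- `I` is the (uniform, sesquilinear) integral of `f` with respect to `μ`. -/
def HasUIntegral (𝕜 : Type*) {T X : Type*} [RCLike 𝕜] [MeasurableSpace T]
    [NormedAddCommGroup X] [InnerProductSpace 𝕜 X] (μ : VectorMeasure T X)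
    (f : T → X) (I : 𝕜) : Prop :=
  ∀ g : ℕ → T → X, (∀ n, IsSimpleFn (g n)) → TendstoUniformly g f atTop →
    Tendsto (fun n => simpleIntegral 𝕜 μ (g n)) atTop (nhds I)

/-- The uniform integral (defaulting to `0` when it does not exist). -/
def uIntegral (𝕜 : Type*) {T X : Type*} [RCLike 𝕜] [MeasurableSpace T]
    [NormedAddCommGroup X] [InnerProductSpace 𝕜 X] (μ : VectorMeasure T X) (f : T → X) : 𝕜 :=
  letI := Classical.propDecidable
  if h : ∃ I, HasUIntegral 𝕜 μ f I then h.choose else 0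

/-- The Monge–Kantorovich norm. -/
def mkNorm (𝕜 : Type*) {T X : Type*} [RCLike 𝕜] [PseudoMetricSpace T] [MeasurableSpace T]
    [NormedAddCommGroup X] [InnerProductSpace 𝕜 X] (μ : VectorMeasure T X) : ℝ :=
  sSup {s | ∃ (f : T → X) (L : NNReal), LipschitzWith L f ∧ (∀ t, ‖f t‖ + (L : ℝ) ≤ 1) ∧
    s = ‖uIntegral 𝕜 μ f‖}

/-- The modified Monge–Kantorovich norm. -/
def mkNormStar (𝕜 : Type*) {T X : Type*} [RCLike 𝕜] [PseudoMetricSpace T] [MeasurableSpace T]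
    [NormedAddCommGroup X] [InnerProductSpace 𝕜 X] (μ : VectorMeasure T X) : ℝ :=
  sSup {s | ∃ f : T → X, LipschitzWith 1 f ∧ s = ‖uIntegral 𝕜 μ f‖}

/-- The `X`-valued Dirac measure `B ↦ δ_t(B) • x`. -/
def diracVM {T : Type*} [MeasurableSpace T] {𝕜 X : Type*} [RCLike 𝕜]
    [NormedAddCommGroup X] [NormedSpace 𝕜 X] (t : T) (x : X) : VectorMeasure T X :=
  ((Measure.dirac t).toSignedMeasure).mapRange
    { toFun := fun c : ℝ => (c : 𝕜) • x
      map_zero' := by simp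
      map_add' := fun a b => by push_cast; rw [add_smul] }
    (RCLike.continuous_ofReal.smul continuous_const)

end


/-! The term `R_i ∘ ω_i(μ)` has variation at most `‖R_i‖ ‖μ‖`, since the preimages under `ω_i`
of a Borel partition form again a Borel partition. A series of vector measures with summable
variations can therefore be summed setwise: countable additivity of the sum follows from that of
the terms by Tannery's theorem, the variations being the dominating sequence, and the variation of
the sum is at most the sum of the variations. Additivity and homogeneity of `H` follow from
uniqueness of sums. -/

section Variation

variable {T X : Type*} [MeasurableSpace T] [NormedAddCommGroup X]

lemma IsBorelPartition.pair_compl {B : Set T} (hB : MeasurableSet B) :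
    IsBorelPartition ({B, Bᶜ} : Finset (Set T)) := by
  classical
  refine ⟨?_, ?_, ?_⟩
  · intro A hA
    rcases Finset.mem_insert.1 hA with rfl | hA
    · exact hB
    · exact (Finset.mem_singleton.1 hA) ▸ hB.compl
  · rw [Finset.coe_pair]
    exact Set.pairwise_pair.2 fun _ => ⟨disjoint_compl_right, disjoint_compl_left⟩
  · simp

lemma sum_nnnorm_le_evar (μ : VectorMeasure T X) {P : Finset (Set T)} (hP : IsBorelPartition P) :
    ∑ A ∈ P, (‖μ A‖₊ : ENNReal) ≤ evar μ :=
  le_iSup₂ (f := fun (P : Finset (Set T)) (_ : IsBorelPartition P) =>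
    ∑ A ∈ P, (‖μ A‖₊ : ENNReal)) P hP

lemma nnnorm_le_evar (μ : VectorMeasure T X) {B : Set T} (hB : MeasurableSet B) :
    (‖μ B‖₊ : ENNReal) ≤ evar μ := by
  classical
  exact (Finset.single_le_sum (f := fun A => (‖μ A‖₊ : ENNReal)) (fun _ _ => zero_le)
    (Finset.mem_insert_self B {Bᶜ})).trans (sum_nnnorm_le_evar μ (.pair_compl hB))

lemma norm_le_varNorm {μ : VectorMeasure T X} (hμ : BddVar μ) {B : Set T}
    (hB : MeasurableSet B) : ‖μ B‖ ≤ varNorm μ := by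
  simpa [varNorm] using ENNReal.toReal_mono hμ (nnnorm_le_evar μ hB)

lemma sum_norm_le_varNorm {μ : VectorMeasure T X} (hμ : BddVar μ) {P : Finset (Set T)}
    (hP : IsBorelPartition P) : ∑ A ∈ P, ‖μ A‖ ≤ varNorm μ := by
  simpa [varNorm, ENNReal.toReal_sum] using ENNReal.toReal_mono hμ (sum_nnnorm_le_evar μ hP)

lemma evar_le_ofReal {μ : VectorMeasure T X} {C : ℝ}
    (h : ∀ P : Finset (Set T), IsBorelPartition P → ∑ A ∈ P, ‖μ A‖ ≤ C) :
    evar μ ≤ ENNReal.ofReal C := by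
  refine iSup₂_le fun P hP => ?_
  calc ∑ A ∈ P, (‖μ A‖₊ : ENNReal) = ENNReal.ofReal (∑ A ∈ P, ‖μ A‖) := by
        rw [ENNReal.ofReal_sum_of_nonneg fun A _ => norm_nonneg (μ A)]
        simp [ofReal_norm, enorm_eq_nnnorm]
    _ ≤ ENNReal.ofReal C := ENNReal.ofReal_le_ofReal (h P hP)

lemma evar_add_le (μ ν : VectorMeasure T X) : evar (μ + ν) ≤ evar μ + evar ν := by
  refine iSup₂_le fun P hP => ?_
  calc ∑ A ∈ P, (‖(μ + ν) A‖₊ : ENNReal)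
      ≤ ∑ A ∈ P, ((‖μ A‖₊ : ENNReal) + ‖ν A‖₊) :=
        Finset.sum_le_sum fun A _ => by exact_mod_cast nnnorm_add_le (μ A) (ν A)
    _ = ∑ A ∈ P, (‖μ A‖₊ : ENNReal) + ∑ A ∈ P, (‖ν A‖₊ : ENNReal) := Finset.sum_add_distrib
    _ ≤ evar μ + evar ν := add_le_add (sum_nnnorm_le_evar μ hP) (sum_nnnorm_le_evar ν hP)

lemma BddVar.add {μ ν : VectorMeasure T X} (hμ : BddVar μ) (hν : BddVar ν) :
    BddVar (μ + ν) :=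
  ne_top_of_le_ne_top (ENNReal.add_ne_top.2 ⟨hμ, hν⟩) (evar_add_le μ ν)

variable {𝕜 : Type*} [NontriviallyNormedField 𝕜] [NormedSpace 𝕜 X]

lemma evar_smul (c : 𝕜) (μ : VectorMeasure T X) : evar (c • μ) = ‖c‖₊ * evar μ := by
  simp only [evar, smul_apply, nnnorm_smul, ENNReal.coe_mul, ← Finset.mul_sum,
    ENNReal.mul_iSup]

lemma BddVar.smul (c : 𝕜) {μ : VectorMeasure T X} (hμ : BddVar μ) : BddVar (c • μ) := by
  rw [BddVar, evar_smul]
  exact ENNReal.mul_ne_top ENNReal.coe_ne_top hμ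

end Variation

section Pushforward

variable {S T X : Type*} [MeasurableSpace S] [MeasurableSpace T] [NormedAddCommGroup X]
  {ω : S → T}

lemma IsBorelPartition.image_preimage [DecidableEq (Set S)] {P : Finset (Set T)}
    (hP : IsBorelPartition P) (hω : Measurable ω) :
    IsBorelPartition (P.image (ω ⁻¹' ·)) := by
  refine ⟨?_, ?_, ?_⟩
  · intro A hA
    obtain ⟨B, hB, rfl⟩ := Finset.mem_image.1 hA
    exact hω (hP.1 B hB)
  · rintro _ hA' _ hB' hne
    obtain ⟨A, hA, rfl⟩ := Finset.mem_image.1 hA'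
    obtain ⟨B, hB, rfl⟩ := Finset.mem_image.1 hB'
    exact (hP.2.1 hA hB fun h => hne (congrArg _ h)).preimage ω
  · rw [Finset.coe_image, Set.sUnion_image, ← Set.preimage_iUnion₂, ← Set.sUnion_eq_biUnion,
      hP.2.2, Set.preimage_univ]

lemma evar_map_le (μ : VectorMeasure S X) (hω : Measurable ω) : evar (μ.map ω) ≤ evar μ := by
  classical
  refine iSup₂_le fun P hP => ?_
  calc ∑ A ∈ P, (‖μ.map ω A‖₊ : ENNReal)
      = ∑ A ∈ P, (‖μ (ω ⁻¹' A)‖₊ : ENNReal) :=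
        Finset.sum_congr rfl fun A hA => by rw [VectorMeasure.map_apply _ hω (hP.1 A hA)]
    _ = ∑ B ∈ P.image (ω ⁻¹' ·), (‖μ B‖₊ : ENNReal) :=
        (Finset.sum_image_of_disjoint (g := fun B => (‖μ B‖₊ : ENNReal)) (by simp)
          fun A hA B hB hne => (hP.2.1 hA hB hne).preimage ω).symm
    _ ≤ evar μ := sum_nnnorm_le_evar μ (hP.image_preimage hω)

lemma BddVar.map {μ : VectorMeasure S X} (hμ : BddVar μ) (hω : Measurable ω) :
    BddVar (μ.map ω) :=
  ne_top_of_le_ne_top hμ (evar_map_le μ hω)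

lemma varNorm_map_le {μ : VectorMeasure S X} (hμ : BddVar μ) (hω : Measurable ω) :
    varNorm (μ.map ω) ≤ varNorm μ :=
  ENNReal.toReal_mono hμ (evar_map_le μ hω)

end Pushforward

section Operators

variable {S T X Y 𝕜 : Type*} [MeasurableSpace S] [MeasurableSpace T]
  [NontriviallyNormedField 𝕜] [NormedAddCommGroup X] [NormedSpace 𝕜 X] [NormedAddCommGroup Y]
  [NormedSpace 𝕜 Y]

lemma opComp_apply (R : X →L[𝕜] Y) (μ : VectorMeasure T X) (B : Set T) :
    opComp R μ B = R (μ B) :=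
  rfl

lemma evar_opComp_le (R : X →L[𝕜] Y) (μ : VectorMeasure T X) :
    evar (opComp R μ) ≤ ‖R‖₊ * evar μ := by
  refine iSup₂_le fun P hP => ?_
  calc ∑ A ∈ P, (‖opComp R μ A‖₊ : ENNReal)
      ≤ ∑ A ∈ P, (‖R‖₊ : ENNReal) * ‖μ A‖₊ :=
        Finset.sum_le_sum fun A _ => by exact_mod_cast R.le_opNNNorm (μ A)
    _ = ‖R‖₊ * ∑ A ∈ P, (‖μ A‖₊ : ENNReal) := (Finset.mul_sum _ _ _).symm
    _ ≤ ‖R‖₊ * evar μ := by gcongr; exact sum_nnnorm_le_evar μ hP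

lemma BddVar.opComp (R : X →L[𝕜] Y) {μ : VectorMeasure T X} (hμ : BddVar μ) :
    BddVar (opComp R μ) :=
  ne_top_of_le_ne_top (ENNReal.mul_ne_top ENNReal.coe_ne_top hμ) (evar_opComp_le R μ)

lemma varNorm_opComp_le (R : X →L[𝕜] Y) {μ : VectorMeasure T X} (hμ : BddVar μ) :
    varNorm (opComp R μ) ≤ ‖R‖ * varNorm μ := by
  simpa [varNorm, ENNReal.toReal_mul] using
    ENNReal.toReal_mono (ENNReal.mul_ne_top ENNReal.coe_ne_top hμ) (evar_opComp_le R μ)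

lemma opComp_map_apply (R : X →L[𝕜] Y) (μ : VectorMeasure S X) {ω : S → T}
    (hω : Measurable ω) {B : Set T} (hB : MeasurableSet B) :
    opComp R (μ.map ω) B = R (μ (ω ⁻¹' B)) := by
  rw [opComp_apply, VectorMeasure.map_apply _ hω hB]

lemma varNorm_opComp_map_le (R : X →L[𝕜] Y) {μ : VectorMeasure S X} (hμ : BddVar μ)
    {ω : S → T} (hω : Measurable ω) : varNorm (opComp R (μ.map ω)) ≤ ‖R‖ * varNorm μ :=
  (varNorm_opComp_le R (hμ.map hω)).trans
    (mul_le_mul_of_nonneg_left (varNorm_map_le hμ hω) (norm_nonneg _))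

end Operators

lemma hasSum_tsum_of_dominated {ι κ E : Type*} [NormedAddCommGroup E] [CompleteSpace E]
    {g : ι → κ → E} {G : ι → E} {bound : ι → ℝ} (h_sum : Summable bound)
    (hg : ∀ i, HasSum (g i) (G i)) (h_bound : ∀ i (s : Finset κ), ‖∑ n ∈ s, g i n‖ ≤ bound i) :
    HasSum (fun n => ∑' i, g i n) (∑' i, G i) := by
  have h_summable (n : κ) : Summable fun i => g i n :=
    h_sum.of_norm_bounded fun i => by simpa using h_bound i {n}
  have := tendsto_tsum_of_dominated_convergence h_sum (f := fun s i => ∑ n ∈ s, g i n) hg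
    (.of_forall fun s i => h_bound i s)
  simpa only [HasSum, ← Summable.tsum_finsetSum fun n _ => h_summable n] using this

namespace MeasureTheory.VectorMeasure

variable {T X ι : Type*} [MeasurableSpace T] [NormedAddCommGroup X] [CompleteSpace X]

open Classical in
noncomputable def series (ν : ι → VectorMeasure T X) : VectorMeasure T X :=
  if h : (∀ i, BddVar (ν i)) ∧ Summable fun i => varNorm (ν i) then
    { measureOf' := fun B => ∑' i, ν i B
      empty' := by simp
      not_measurable' := fun B hB => by simp [(ν _).not_measurable hB]
      m_iUnion' := fun f hfm hfd => by
        refine hasSum_tsum_of_dominated h.2 (fun i => (ν i).m_iUnion hfm hfd) fun i s => ?_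
        rw [← of_biUnion_finset (fun m _ n _ hmn => hfd hmn) fun n _ => hfm n]
        exact norm_le_varNorm (h.1 i) (Finset.measurableSet_biUnion s fun n _ => hfm n) }
  else 0

variable {ν : ι → VectorMeasure T X}

lemma series_apply (hν : ∀ i, BddVar (ν i)) (hs : Summable fun i => varNorm (ν i))
    (B : Set T) : series ν B = ∑' i, ν i B := by
  rw [series, dif_pos ⟨hν, hs⟩]
  rfl

lemma hasSum_series_apply (hν : ∀ i, BddVar (ν i)) (hs : Summable fun i => varNorm (ν i))
    {B : Set T} (hB : MeasurableSet B) : HasSum (fun i => ν i B) (series ν B) := by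
  rw [series_apply hν hs]
  exact (hs.of_norm_bounded fun i => norm_le_varNorm (hν i) hB).hasSum

lemma sum_norm_series_le (hν : ∀ i, BddVar (ν i)) (hs : Summable fun i => varNorm (ν i))
    {P : Finset (Set T)} (hP : IsBorelPartition P) :
    ∑ A ∈ P, ‖series ν A‖ ≤ ∑' i, varNorm (ν i) := by
  have h_summable (A : Set T) (hA : A ∈ P) : Summable fun i => ‖ν i A‖ :=
    hs.of_nonneg_of_le (fun _ => norm_nonneg _) fun i => norm_le_varNorm (hν i) (hP.1 A hA)
  calc ∑ A ∈ P, ‖series ν A‖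
      ≤ ∑ A ∈ P, ∑' i, ‖ν i A‖ := Finset.sum_le_sum fun A hA => by
        rw [series_apply hν hs]
        exact norm_tsum_le_tsum_norm (h_summable A hA)
    _ = ∑' i, ∑ A ∈ P, ‖ν i A‖ := (Summable.tsum_finsetSum h_summable).symm
    _ ≤ ∑' i, varNorm (ν i) :=
        (summable_sum h_summable).tsum_le_tsum (fun i => sum_norm_le_varNorm (hν i) hP) hs

lemma bddVar_series (hν : ∀ i, BddVar (ν i)) (hs : Summable fun i => varNorm (ν i)) :
    BddVar (series ν) :=
  ne_top_of_le_ne_top ENNReal.ofReal_ne_top (evar_le_ofReal fun _ => sum_norm_series_le hν hs)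

lemma varNorm_series_le (hν : ∀ i, BddVar (ν i)) (hs : Summable fun i => varNorm (ν i)) :
    varNorm (series ν) ≤ ∑' i, varNorm (ν i) :=
  ENNReal.toReal_le_of_le_ofReal (tsum_nonneg fun _ => ENNReal.toReal_nonneg)
    (evar_le_ofReal fun _ => sum_norm_series_le hν hs)

end MeasureTheory.VectorMeasure

theorem countable_markovH_exists_general
    {T : Type*} [MetricSpace T] [MeasurableSpace T] [BorelSpace T]
    {𝕜 X : Type*} [RCLike 𝕜] [NormedAddCommGroup X] [InnerProductSpace 𝕜 X] [CompleteSpace X]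
    (ω : ℕ → T → T) (r : ℕ → NNReal) (hω : ∀ i, LipschitzWith (r i) (ω i))
    (R : ℕ → X →L[𝕜] X) (hR : Summable fun i => ‖R i‖) :
    ∃ Hop : VectorMeasure T X → VectorMeasure T X,
      (∀ μ : VectorMeasure T X, BddVar μ →
        (Summable fun i => varNorm (opComp (R i) (μ.map (ω i)))) ∧
        (∀ B : Set T, MeasurableSet B →
          HasSum (fun i => (R i) (μ (ω i ⁻¹' B))) (Hop μ B)) ∧
        BddVar (Hop μ) ∧
        varNorm (Hop μ) ≤ (∑' i, ‖R i‖) * varNorm μ) ∧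
      (∀ μ ν : VectorMeasure T X, BddVar μ → BddVar ν →
        Hop (μ + ν) = Hop μ + Hop ν) ∧
      (∀ (c : 𝕜) (μ : VectorMeasure T X), BddVar μ → Hop (c • μ) = c • Hop μ) := by
  have hωm (i : ℕ) : Measurable (ω i) := (hω i).continuous.measurable
  have hbdd {μ : VectorMeasure T X} (hμ : BddVar μ) (i : ℕ) :
      BddVar (opComp (R i) (μ.map (ω i))) :=
    (hμ.map (hωm i)).opComp (R i)
  have hle {μ : VectorMeasure T X} (hμ : BddVar μ) (i : ℕ) :
      varNorm (opComp (R i) (μ.map (ω i))) ≤ ‖R i‖ * varNorm μ :=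
    varNorm_opComp_map_le (R i) hμ (hωm i)
  have hsum {μ : VectorMeasure T X} (hμ : BddVar μ) :
      Summable fun i => varNorm (opComp (R i) (μ.map (ω i))) :=
    (hR.mul_right _).of_nonneg_of_le (fun _ => ENNReal.toReal_nonneg) (hle hμ)
  let H (μ : VectorMeasure T X) := VectorMeasure.series fun i => opComp (R i) (μ.map (ω i))
  have hasSum_H {μ : VectorMeasure T X} (hμ : BddVar μ) {B : Set T} (hB : MeasurableSet B) :
      HasSum (fun i => R i (μ (ω i ⁻¹' B))) (H μ B) := by
    simpa only [opComp_map_apply _ _ (hωm _) hB] using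
      VectorMeasure.hasSum_series_apply (hbdd hμ) (hsum hμ) hB
  refine ⟨H, fun μ hμ => ⟨hsum hμ, fun B => hasSum_H hμ,
    VectorMeasure.bddVar_series (hbdd hμ) (hsum hμ), ?_⟩, ?_, ?_⟩
  · calc varNorm (H μ) ≤ ∑' i, varNorm (opComp (R i) (μ.map (ω i))) :=
          VectorMeasure.varNorm_series_le (hbdd hμ) (hsum hμ)
      _ ≤ ∑' i, ‖R i‖ * varNorm μ := (hsum hμ).tsum_le_tsum (hle hμ) (hR.mul_right _)
      _ = (∑' i, ‖R i‖) * varNorm μ := tsum_mul_right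
  · refine fun μ ν hμ hν => VectorMeasure.ext fun B hB => (hasSum_H (hμ.add hν) hB).unique ?_
    simpa only [add_apply, map_add] using (hasSum_H hμ hB).add (hasSum_H hν hB)
  · refine fun c μ hμ => VectorMeasure.ext fun B hB => (hasSum_H (hμ.smul c) hB).unique ?_
    simpa only [smul_apply, map_smul] using (hasSum_H hμ hB).const_smul c

/-- countable case: if `(r_i)` is bounded and `∑ ‖R_i‖ < ∞`, the series
`∑ R_i ∘ ω_i(μ)` converges absolutely in the variational norm and defines a linear,
continuous operator `H` with `‖H(μ)‖ ≤ (∑ ‖R_i‖) ‖μ‖`. -/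
theorem countable_markovH_exists
    {T : Type*} [MetricSpace T] [CompactSpace T] [MeasurableSpace T] [BorelSpace T]
    {𝕜 X : Type*} [RCLike 𝕜] [NormedAddCommGroup X] [InnerProductSpace 𝕜 X] [CompleteSpace X]
    (ω : ℕ → T → T) (r : ℕ → NNReal) (hω : ∀ i, LipschitzWith (r i) (ω i))
    (hrbdd : ∃ C : NNReal, ∀ i, r i ≤ C)
    (R : ℕ → X →L[𝕜] X) (hR : Summable fun i => ‖R i‖) :
    ∃ Hop : VectorMeasure T X → VectorMeasure T X,
      (∀ μ : VectorMeasure T X, BddVar μ →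
        (Summable fun i => varNorm (opComp (R i) (μ.map (ω i)))) ∧
        (∀ B : Set T, MeasurableSet B →
          HasSum (fun i => (R i) (μ (ω i ⁻¹' B))) (Hop μ B)) ∧
        BddVar (Hop μ) ∧
        varNorm (Hop μ) ≤ (∑' i, ‖R i‖) * varNorm μ) ∧
      (∀ μ ν : VectorMeasure T X, BddVar μ → BddVar ν →
        Hop (μ + ν) = Hop μ + Hop ν) ∧
      (∀ (c : 𝕜) (μ : VectorMeasure T X), BddVar μ → Hop (c • μ) = c • Hop μ) :=
  countable_markovH_exists_general ω r hω R hR
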